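/- arXiv:2605.20933 — 6 statements merged into one kernel-verified Lean document; each statement's English description precedes it below -/
import Mathlib

section
/- Let n ≥ 1, let J ∈ ℝ^{n×n}, let λ ∈ ℝ and let v ∈ ℝⁿ be a nonzero vector with Jv = λv. Form the bordered (n+1)×(n+1) block matrix B = [[J − λI, −v], [−vᵀ, 0]]. Then B is invertible if and only if λ is a simple eigenvalue of J (i.e., λ is a root of the characteristic polynomial of J of multiplicity exactly one). -/
/-!
Write `A = J - λ I`, so `A v = 0`. A kernel vector `(x, t)` of the bordered matrix is a solution
of `A x = t v` with `v ⬝ᵥ x = 0`. Since `v ⬝ᵥ v ≠ 0`, subtracting from `x` its component along `v`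
shows that a nonzero solution exists iff the preimage `A⁻¹(ℝ v)` is strictly larger than `ℝ v`.
As `A` kills `ℝ v`, the kernels of the powers of `A` never leave `ℝ v` iff `A⁻¹(ℝ v) = ℝ v`, i.e.
iff the generalized `0`-eigenspace of `A` is the line `ℝ v`. Its dimension is the multiplicity of
`λ` as a root of the characteristic polynomial of `J`.
-/

open Matrix

namespace Module.End

variable {R M : Type*} [CommRing R] [AddCommGroup M] [Module R M]

theorem maxGenEigenspace_zero_le_iff_comap_le (f : End R M) {W : Submodule R M}
    (hW : W ≤ LinearMap.ker f) :
    f.maxGenEigenspace 0 ≤ W ↔ W.comap f ≤ W := by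
  constructor
  · intro hE x hx
    refine hE ((mem_maxGenEigenspace f 0 x).mpr ⟨2, ?_⟩)
    simpa [pow_two] using hW hx
  · intro hcomap
    rw [← iSup_genEigenspace_eq]
    refine iSup_le fun k => ?_
    rw [genEigenspace_zero_nat]
    induction k with
    | zero => rw [pow_zero, one_eq_id, LinearMap.ker_id]; exact bot_le
    | succ k ih =>
      rw [pow_succ, mul_eq_comp, LinearMap.ker_comp]
      exact (Submodule.comap_mono ih).trans hcomap

end Module.End

theorem Submodule.finrank_eq_one_iff_le_span_singleton {K V : Type*} [DivisionRing K]
    [AddCommGroup V] [Module K V] {E : Submodule K V} [FiniteDimensional K E] {v : V}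
    (hv : v ≠ 0) (hvE : v ∈ E) :
    Module.finrank K E = 1 ↔ E ≤ K ∙ v := by
  have hle : K ∙ v ≤ E := (span_singleton_le_iff_mem v E).mpr hvE
  constructor
  · intro h
    exact (eq_of_le_of_finrank_eq hle (by rw [finrank_span_singleton hv, h])).ge
  · intro h
    rw [le_antisymm h hle, finrank_span_singleton hv]

namespace Matrix

theorem fromBlocks_col_row_mulVec_sumElim {n R : Type*} [Fintype n] [CommSemiring R]
    (A : Matrix n n R) (b c x : n → R) (y : Unit → R) :
    fromBlocks A (of fun i (_ : Unit) => b i) (of fun (_ : Unit) j => c j) 0 *ᵥ Sum.elim x y =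
      Sum.elim (A *ᵥ x + y () • b) fun _ => c ⬝ᵥ x := by
  rw [fromBlocks_mulVec]
  ext (i | _)
  · simp [mulVec, dotProduct, mul_comm]
  · simp [mulVec, dotProduct]

theorem isUnit_fromBlocks_col_row_iff {n K : Type*} [Fintype n] [DecidableEq n] [Field K]
    (A : Matrix n n K) (b c : n → K) :
    IsUnit (fromBlocks A (of fun i (_ : Unit) => b i) (of fun (_ : Unit) j => c j) 0) ↔
      ∀ (x : n → K) (t : K), A *ᵥ x + t • b = 0 → c ⬝ᵥ x = 0 → x = 0 ∧ t = 0 := by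
  rw [← mulVec_injective_iff_isUnit, ← coe_mulVecLin, ← LinearMap.ker_eq_bot,
    ker_mulVecLin_eq_bot_iff]
  constructor
  · intro h x t hx hc
    have := h (Sum.elim x fun _ => t)
      (by rw [fromBlocks_col_row_mulVec_sumElim, hx, hc]; exact Sum.elim_zero_zero)
    exact ⟨congrArg (· ∘ Sum.inl) this, congrFun this (Sum.inr ())⟩
  · intro h z hz
    rw [← Sum.elim_comp_inl_inr z, fromBlocks_col_row_mulVec_sumElim] at hz
    obtain ⟨hx, ht⟩ := h _ _ (congrArg (· ∘ Sum.inl) hz) (congrFun hz (Sum.inr ()))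
    rw [← Sum.elim_comp_inl_inr z, hx, ← Sum.elim_zero_zero]
    exact congrArg _ (funext fun _ => ht)

theorem comap_toLin'_span_singleton_le_iff {n K : Type*} [Fintype n] [DecidableEq n] [Field K]
    {A : Matrix n n K} {v : n → K}
    (hAv : A *ᵥ v = 0) (hvv : v ⬝ᵥ v ≠ 0) :
    (K ∙ v).comap A.toLin' ≤ K ∙ v ↔
      ∀ (x : n → K) (t : K), A *ᵥ x = t • v → v ⬝ᵥ x = 0 → x = 0 ∧ t = 0 := by
  have hv : v ≠ 0 := by rintro rfl; simp at hvv
  constructor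
  · intro h x t hAx hvx
    have hx : x ∈ (K ∙ v).comap A.toLin' := by
      rw [Submodule.mem_comap, toLin'_apply, hAx]
      exact Submodule.smul_mem _ t (Submodule.mem_span_singleton_self v)
    obtain ⟨s, rfl⟩ := Submodule.mem_span_singleton.mp (h hx)
    have hs : s = 0 := by simpa [dotProduct_smul, hvv] using hvx
    subst hs
    simpa [hAv, eq_comm, hv] using hAx
  · intro h y hy
    obtain ⟨t, hAy⟩ := Submodule.mem_span_singleton.mp hy
    rw [toLin'_apply] at hAy
    set s := v ⬝ᵥ y / v ⬝ᵥ v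
    have := h (y - s • v) t (by simp [mulVec_sub, mulVec_smul, hAv, hAy])
      (by simp [dotProduct_sub, dotProduct_smul, s, div_mul_cancel₀ _ hvv])
    exact Submodule.mem_span_singleton.mpr ⟨s, (sub_eq_zero.mp this.1).symm⟩

end Matrix

open Module.End in
theorem bordered_matrix_invertible_iff_simple_eigenvalue_general
    {n : ℕ} (J : Matrix (Fin n) (Fin n) ℝ) (lam : ℝ)
    (v : Fin n → ℝ) (hv : v ≠ 0) (heig : J.mulVec v = lam • v) :
    IsUnit (Matrix.fromBlocks (J - lam • 1)
        (Matrix.of fun i (_ : Unit) => -v i)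
        (Matrix.of fun (_ : Unit) j => -v j)
        (0 : Matrix Unit Unit ℝ)) ↔
      Polynomial.rootMultiplicity lam J.charpoly = 1 := by
  set A := J - lam • 1
  have hAv : A *ᵥ v = 0 := by rw [sub_mulVec, heig, smul_mulVec, one_mulVec, sub_self]
  have hvv : v ⬝ᵥ v ≠ 0 := by simpa [dotProduct_self_eq_zero] using hv
  have hker : ℝ ∙ v ≤ LinearMap.ker A.toLin' :=
    (Submodule.span_singleton_le_iff_mem _ _).mpr (by simpa using hAv)
  have hvE : v ∈ maxGenEigenspace A.toLin' 0 :=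
    (mem_maxGenEigenspace _ _ _).mpr ⟨1, by simpa using hAv⟩
  have hmult : J.charpoly.rootMultiplicity lam =
      Module.finrank ℝ (maxGenEigenspace A.toLin' 0) := by
    rw [← charpoly_toLin', ← LinearMap.finrank_maxGenEigenspace_eq,
      maxGenEigenspace_eq_maxGenEigenspace_zero, map_sub, map_smul, toLin'_one, one_eq_id]
  refine (isUnit_fromBlocks_col_row_iff A (-v) (-v)).trans ?_
  rw [hmult,
    Submodule.finrank_eq_one_iff_le_span_singleton hv hvE,
    maxGenEigenspace_zero_le_iff_comap_le _ hker, comap_toLin'_span_singleton_le_iff hAv hvv]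
  simp only [smul_neg, ← sub_eq_add_neg, sub_eq_zero, neg_dotProduct, neg_eq_zero]

/-- The bordered matrix `[[J - λI, -v], [-vᵀ, 0]]` is invertible
if and only if `λ` is a simple eigenvalue of `J` (a root of the characteristic
polynomial of multiplicity exactly one). -/
theorem bordered_matrix_invertible_iff_simple_eigenvalue
    {n : ℕ} (hn : 1 ≤ n) (J : Matrix (Fin n) (Fin n) ℝ) (lam : ℝ)
    (v : Fin n → ℝ) (hv : v ≠ 0) (heig : J.mulVec v = lam • v) :
    IsUnit (Matrix.fromBlocks (J - lam • 1)
        (Matrix.of fun i (_ : Unit) => -v i)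
        (Matrix.of fun (_ : Unit) j => -v j)
        (0 : Matrix Unit Unit ℝ)) ↔
      Polynomial.rootMultiplicity lam J.charpoly = 1 :=
  bordered_matrix_invertible_iff_simple_eigenvalue_general J lam v hv heig
end

section
/- Let n, m ≥ 1, let u, v ∈ ℝⁿ be nonzero vectors with uᵀv ≠ 0, let λ ∈ ℝ with λ ≠ 0, let f₁,…,f_m ∈ ℝ and weights w₁,…,w_m ≥ 0. Consider the set S = { |Σᵢ₌₁ᵐ fᵢ · (uᵀEᵢv)| / (|λ| · |uᵀv|) : E₁,…,E_m ∈ ℝ^{n×n} with ‖Eᵢ‖₂ ≤ wᵢ for all i }. Then the number κ = (Σᵢ₌₁ᵐ |fᵢ| wᵢ) · ‖u‖ · ‖v‖ / (|λ| · |uᵀv|) is the greatest element of S: every element of S is ≤ κ, and κ ∈ S (the maximum is attained, e.g. by Eᵢ = sign(fᵢ) wᵢ uvᵀ/(‖u‖‖v‖)). -/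
open Matrix

/-- Euclidean norm of a vector in `ℝⁿ`. -/
noncomputable def e2norm {n : ℕ} (v : Fin n → ℝ) : ℝ := Real.sqrt (∑ i, v i ^ 2)

/-- Frobenius norm of a real matrix. -/
noncomputable def frobNorm {n m : ℕ} (M : Matrix (Fin n) (Fin m) ℝ) : ℝ :=
  Real.sqrt (∑ i, ∑ j, M i j ^ 2)

/-- Spectral norm: the supremum of `‖M x‖` over Euclidean-unit vectors `x`. -/
noncomputable def specNorm {n m : ℕ} (M : Matrix (Fin n) (Fin m) ℝ) : ℝ :=
  sSup ((fun x => e2norm (M.mulVec x)) '' {x : Fin m → ℝ | e2norm x = 1})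

lemma e2norm_eq {n : ℕ} (v : Fin n → ℝ) :
    e2norm v = ‖(WithLp.equiv 2 (Fin n → ℝ)).symm v‖ := by
  simp [e2norm, EuclideanSpace.norm_eq, sq_abs]

lemma e2norm_nonneg {n : ℕ} (v : Fin n → ℝ) : 0 ≤ e2norm v := Real.sqrt_nonneg _

lemma cauchy {n : ℕ} (a b : Fin n → ℝ) : |a ⬝ᵥ b| ≤ e2norm a * e2norm b := by
  rw [e2norm_eq, e2norm_eq]
  have := abs_real_inner_le_norm ((WithLp.equiv 2 (Fin n → ℝ)).symm a)
    ((WithLp.equiv 2 (Fin n → ℝ)).symm b)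
  simpa [PiLp.inner_apply, dotProduct, mul_comm] using this

lemma e2norm_smul {n : ℕ} (c : ℝ) (v : Fin n → ℝ) : e2norm (c • v) = |c| * e2norm v := by
  rw [e2norm_eq, e2norm_eq]
  have : (WithLp.equiv 2 (Fin n → ℝ)).symm (c • v) = c • (WithLp.equiv 2 (Fin n → ℝ)).symm v := rfl
  rw [this, norm_smul]; simp [Real.norm_eq_abs]

lemma e2norm_single {m : ℕ} (hm : 1 ≤ m) :
    e2norm (Pi.single (⟨0, hm⟩ : Fin m) (1 : ℝ)) = 1 := by
  simp [e2norm, Pi.single_apply, sq, ite_mul, Finset.sum_ite_eq']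

lemma unitSphere_nonempty {m : ℕ} (hm : 1 ≤ m) :
    {x : Fin m → ℝ | e2norm x = 1}.Nonempty :=
  ⟨Pi.single ⟨0, hm⟩ 1, e2norm_single hm⟩

lemma frob_bound {n m : ℕ} (M : Matrix (Fin n) (Fin m) ℝ) (x : Fin m → ℝ) :
    e2norm (M.mulVec x) ≤ frobNorm M * e2norm x := by
  have h1 : ∀ i, (M.mulVec x i) ^ 2 ≤ (∑ j, M i j ^ 2) * (∑ j, x j ^ 2) := by
    intro i
    have hc := cauchy (M i) x
    have : (M.mulVec x i) ^ 2 = |M i ⬝ᵥ x| ^ 2 := by rw [sq_abs]; rfl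
    rw [this]
    calc |M i ⬝ᵥ x| ^ 2 ≤ (e2norm (M i) * e2norm x) ^ 2 := by
          exact pow_le_pow_left₀ (abs_nonneg _) hc 2
      _ = (∑ j, M i j ^ 2) * (∑ j, x j ^ 2) := by
          rw [mul_pow, e2norm, e2norm, Real.sq_sqrt (by positivity), Real.sq_sqrt (by positivity)]
  have h2 : ∑ i, (M.mulVec x i) ^ 2 ≤ (∑ i, ∑ j, M i j ^ 2) * (∑ j, x j ^ 2) := by
    rw [Finset.sum_mul]; exact Finset.sum_le_sum fun i _ => h1 i
  calc e2norm (M.mulVec x) = Real.sqrt (∑ i, (M.mulVec x i) ^ 2) := rfl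
    _ ≤ Real.sqrt ((∑ i, ∑ j, M i j ^ 2) * (∑ j, x j ^ 2)) := Real.sqrt_le_sqrt h2
    _ = frobNorm M * e2norm x := by rw [Real.sqrt_mul (by positivity)]; rfl

lemma specNorm_le {n m : ℕ} (hm : 1 ≤ m) (M : Matrix (Fin n) (Fin m) ℝ) (C : ℝ)
    (h : ∀ x, e2norm x = 1 → e2norm (M.mulVec x) ≤ C) : specNorm M ≤ C := by
  apply csSup_le ((unitSphere_nonempty hm).image _)
  rintro s ⟨x, hx, rfl⟩; exact h x hx

lemma le_specNorm {n m : ℕ} (M : Matrix (Fin n) (Fin m) ℝ) (x : Fin m → ℝ)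
    (hx : e2norm x = 1) : e2norm (M.mulVec x) ≤ specNorm M := by
  apply le_csSup
  · refine ⟨frobNorm M, ?_⟩
    rintro s ⟨y, hy, rfl⟩
    have := frob_bound M y
    simpa [Set.mem_setOf_eq.mp hy] using this
  · exact ⟨x, hx, rfl⟩

lemma e2norm_mulVec_le {n m : ℕ} (hm : 1 ≤ m) (M : Matrix (Fin n) (Fin m) ℝ)
    (x : Fin m → ℝ) : e2norm (M.mulVec x) ≤ specNorm M * e2norm x := by
  by_cases hx : e2norm x = 0
  · have hx0 : x = 0 := by
      have hs : ∑ i, x i ^ 2 = 0 := by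
        rcases (Real.sqrt_eq_zero (by positivity)).mp hx with h; exact h
      funext i
      have := (Finset.sum_eq_zero_iff_of_nonneg (fun i _ => sq_nonneg (x i))).mp hs i (by simp)
      exact pow_eq_zero_iff (by norm_num) |>.mp this
    simp [hx0, hx, e2norm, Matrix.mulVec_zero]
  · have hxp : 0 < e2norm x := lt_of_le_of_ne (e2norm_nonneg x) (Ne.symm hx)
    have hux : e2norm ((e2norm x)⁻¹ • x) = 1 := by
      rw [e2norm_smul, abs_of_pos (by positivity), inv_mul_cancel₀ hx]
    have := le_specNorm M _ hux
    rw [Matrix.mulVec_smul, e2norm_smul, abs_of_pos (by positivity)] at this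
    calc e2norm (M.mulVec x) = (e2norm x) * ((e2norm x)⁻¹ * e2norm (M.mulVec x)) := by
          field_simp
      _ ≤ e2norm x * specNorm M := by
          exact mul_le_mul_of_nonneg_left this (le_of_lt hxp)
      _ = specNorm M * e2norm x := mul_comm _ _

lemma e2norm_pos {n : ℕ} {x : Fin n → ℝ} (hx : x ≠ 0) : 0 < e2norm x := by
  rw [e2norm_eq]
  rw [norm_pos_iff]
  intro h
  apply hx
  have := congrArg (WithLp.equiv 2 (Fin n → ℝ)) h
  simpa using this

lemma mul_sign (x : ℝ) : x * Real.sign x = |x| := by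
  rcases lt_trichotomy x 0 with h|h|h
  · rw [Real.sign_of_neg h, abs_of_neg h]; ring
  · simp [h]
  · rw [Real.sign_of_pos h, abs_of_pos h]; ring

lemma abs_sign_le (x : ℝ) : |Real.sign x| ≤ 1 := by
  rcases Real.sign_apply_eq x with h|h|h <;> simp [h]

lemma vecMulVec_mulVec' {n : ℕ} (u v x : Fin n → ℝ) :
    (Matrix.vecMulVec u v).mulVec x = (v ⬝ᵥ x) • u := by
  funext i
  simp [Matrix.vecMulVec, Matrix.mulVec, dotProduct, Finset.mul_sum, Finset.sum_mul,
    mul_comm, mul_assoc, mul_left_comm]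


/-- the normwise relative eigenvalue condition number
`κ = (Σᵢ |fᵢ| wᵢ) ‖u‖ ‖v‖ / (|λ| |uᵀv|)` is the greatest value of
`|Σᵢ fᵢ uᵀEᵢv| / (|λ| |uᵀv|)` over perturbations with `‖Eᵢ‖₂ ≤ wᵢ`. -/
theorem eigenvalue_condition_number
    {n m : ℕ} (hn : 1 ≤ n) (hm : 1 ≤ m)
    (u v : Fin n → ℝ) (hu : u ≠ 0) (hv : v ≠ 0) (huv : u ⬝ᵥ v ≠ 0)
    (lam : ℝ) (hlam : lam ≠ 0)
    (f w : Fin m → ℝ) (hw : ∀ i, 0 ≤ w i) :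
    IsGreatest
      {s : ℝ | ∃ E : Fin m → Matrix (Fin n) (Fin n) ℝ,
        (∀ i, specNorm (E i) ≤ w i) ∧
        s = |∑ i, f i * (u ⬝ᵥ (E i).mulVec v)| / (|lam| * |u ⬝ᵥ v|)}
      ((∑ i, |f i| * w i) * e2norm u * e2norm v / (|lam| * |u ⬝ᵥ v|)) := by
  have hnu : 0 < e2norm u := e2norm_pos hu
  have hnv : 0 < e2norm v := e2norm_pos hv
  have hD : 0 < |lam| * |u ⬝ᵥ v| :=
    mul_pos (abs_pos.mpr hlam) (abs_pos.mpr huv)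
  constructor
  · -- membership: the maximum is attained
    set c : Fin m → ℝ := fun i => Real.sign (f i) * w i / (e2norm u * e2norm v) with hc
    refine ⟨fun i => c i • Matrix.vecMulVec u v, ?_, ?_⟩
    · intro i
      apply specNorm_le hn _ _
      intro x hx
      have hmv : (c i • Matrix.vecMulVec u v).mulVec x = c i • ((v ⬝ᵥ x) • u) := by
        rw [Matrix.smul_mulVec, vecMulVec_mulVec']
      rw [hmv, e2norm_smul, e2norm_smul]
      have hvx : |v ⬝ᵥ x| ≤ e2norm v := by
        have := cauchy v x
        rwa [hx, mul_one] at this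
      have hci : |c i| ≤ w i / (e2norm u * e2norm v) := by
        rw [hc]
        simp only [abs_div, abs_mul, abs_of_nonneg (hw i),
          abs_of_pos (mul_pos hnu hnv)]
        exact (div_le_div_iff_of_pos_right (mul_pos hnu hnv)).mpr
          (mul_le_of_le_one_left (hw i) (abs_sign_le _))
      calc |c i| * (|v ⬝ᵥ x| * e2norm u)
          ≤ (w i / (e2norm u * e2norm v)) * (e2norm v * e2norm u) := by
            exact mul_le_mul hci (mul_le_mul_of_nonneg_right hvx (e2norm_nonneg u))
              (mul_nonneg (abs_nonneg _) (e2norm_nonneg u))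
              (div_nonneg (hw i) (le_of_lt (mul_pos hnu hnv)))
        _ = w i := by
            rw [mul_comm (e2norm v) (e2norm u), div_mul_eq_mul_div, mul_comm (w i),
              mul_div_assoc, ← mul_div_assoc]
            exact mul_div_cancel_left₀ _ (ne_of_gt (mul_pos hnu hnv))
    · congr 1
      have hterm : ∀ i, f i * (u ⬝ᵥ (c i • Matrix.vecMulVec u v).mulVec v)
          = |f i| * w i * (e2norm u * e2norm v) := by
        intro i
        rw [Matrix.smul_mulVec, vecMulVec_mulVec']
        have huu : u ⬝ᵥ u = e2norm u ^ 2 := by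
          rw [e2norm, Real.sq_sqrt (by positivity)]; simp [dotProduct, sq]
        have hvv : v ⬝ᵥ v = e2norm v ^ 2 := by
          rw [e2norm, Real.sq_sqrt (by positivity)]; simp [dotProduct, sq]
        have : u ⬝ᵥ (c i • (v ⬝ᵥ v) • u) = c i * ((v ⬝ᵥ v) * (u ⬝ᵥ u)) := by
          rw [dotProduct_smul, dotProduct_smul, smul_eq_mul, smul_eq_mul]
        rw [this, huu, hvv, hc, ← mul_sign (f i)]
        field_simp
      rw [Finset.sum_congr rfl (fun i _ => hterm i), ← Finset.sum_mul]
      have hs : 0 ≤ ∑ i, |f i| * w i :=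
        Finset.sum_nonneg fun i _ => mul_nonneg (abs_nonneg _) (hw i)
      rw [abs_of_nonneg (mul_nonneg hs (mul_nonneg (e2norm_nonneg u) (e2norm_nonneg v)))]
      ring
  · -- upper bound
    rintro s ⟨E, hE, rfl⟩
    rw [div_le_div_iff_of_pos_right hD]
    calc |∑ i, f i * (u ⬝ᵥ (E i).mulVec v)|
        ≤ ∑ i, |f i * (u ⬝ᵥ (E i).mulVec v)| := Finset.abs_sum_le_sum_abs _ _
      _ ≤ ∑ i, |f i| * (w i * (e2norm u * e2norm v)) := by
          apply Finset.sum_le_sum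
          intro i _
          rw [abs_mul]
          apply mul_le_mul_of_nonneg_left ?_ (abs_nonneg _)
          calc |u ⬝ᵥ (E i).mulVec v| ≤ e2norm u * e2norm ((E i).mulVec v) := cauchy _ _
            _ ≤ e2norm u * (specNorm (E i) * e2norm v) := by
                apply mul_le_mul_of_nonneg_left (e2norm_mulVec_le hn _ _) (e2norm_nonneg u)
            _ ≤ e2norm u * (w i * e2norm v) := by
                exact mul_le_mul_of_nonneg_left
                  (mul_le_mul_of_nonneg_right (hE i) (e2norm_nonneg v)) (e2norm_nonneg u)
            _ = w i * (e2norm u * e2norm v) := by ring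
      _ = (∑ i, |f i| * w i) * e2norm u * e2norm v := by
          simp only [← mul_assoc]
          rw [← Finset.sum_mul, ← Finset.sum_mul]
end

section
/- Let n ≥ 1, let J ∈ ℝ^{n×n}, let λ ∈ ℝ be a simple eigenvalue of J (a root of the characteristic polynomial of J of multiplicity exactly one) with eigenvector v ≠ 0, Jv = λv. Let V ∈ ℝ^{n×(n−1)} be a matrix of rank n−1 whose columns are orthogonal to v, i.e. Vᵀv = 0. Then the (n−1)×(n−1) matrix Vᵀ(J − λI)V is invertible. -/
open Matrix

/-!
Suppose `Vᵀ(J - λI)V x = 0` and put `w = V x`, `A = J - λI`. The kernel of `Vᵀ` is the line `ℝ v`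
(rank count), so `A w ∈ ℝ v` and hence `A² w = 0`: `w` lies in the generalized eigenspace of `λ`.
For a simple eigenvalue that space has dimension one, so it is `ℝ v` and `w = a v`. Since `v` is
orthogonal to the columns of `V`, `a ‖v‖² = v ⬝ᵥ w = 0`, so `w = 0`, and `x = 0` because `V` has
full column rank.
-/

namespace LinearMap

variable {K M : Type*} [Field K] [AddCommGroup M] [Module K M] [FiniteDimensional K M]

theorem maxGenEigenspace_eq_span_of_rootMultiplicity_eq_one (φ : Module.End K M) {μ : K}
    (hμ : φ.charpoly.rootMultiplicity μ = 1) {v : M} (hv : v ≠ 0) (hφv : φ v = μ • v) :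
    φ.maxGenEigenspace μ = K ∙ v := by
  have hle : K ∙ v ≤ φ.maxGenEigenspace μ := by
    rw [Submodule.span_singleton_le_iff_mem]
    exact φ.genEigenspace_le_maximal μ 1 (Module.End.mem_eigenspace_iff.mpr hφv)
  refine (Submodule.eq_of_le_of_finrank_eq hle ?_).symm
  rw [finrank_span_singleton hv, finrank_maxGenEigenspace_eq, hμ]

theorem mem_span_of_sub_smul_apply_mem_span (φ : Module.End K M) {μ : K}
    (hμ : φ.charpoly.rootMultiplicity μ = 1) {v : M} (hv : v ≠ 0) (hφv : φ v = μ • v) {w : M}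
    (hw : φ w - μ • w ∈ K ∙ v) : w ∈ K ∙ v := by
  rw [← φ.maxGenEigenspace_eq_span_of_rootMultiplicity_eq_one hμ hv hφv,
    Module.End.mem_maxGenEigenspace]
  obtain ⟨c, hc⟩ := Submodule.mem_span_singleton.mp hw
  refine ⟨2, ?_⟩
  simp [pow_two, ← hc, hφv]

end LinearMap

namespace Matrix

variable {K m n : Type*} [Field K] [Fintype n]

theorem rank_add_finrank_ker_mulVecLin (B : Matrix m n K) :
    B.rank + Module.finrank K (LinearMap.ker B.mulVecLin) = Fintype.card n := by
  rw [rank, LinearMap.finrank_range_add_finrank_ker, Module.finrank_fintype_fun_eq_card]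

theorem mulVec_injective_of_rank_eq_card {B : Matrix m n K} (hB : B.rank = Fintype.card n) :
    Function.Injective B.mulVec := by
  have hker := B.rank_add_finrank_ker_mulVecLin
  have hker0 : LinearMap.ker B.mulVecLin = ⊥ := Submodule.finrank_eq_zero.mp (by omega)
  exact LinearMap.ker_eq_bot.mp hker0

theorem ker_mulVecLin_eq_span_singleton {B : Matrix m n K} (hB : B.rank + 1 = Fintype.card n)
    {v : n → K} (hv : v ≠ 0) (hBv : B *ᵥ v = 0) : LinearMap.ker B.mulVecLin = K ∙ v := by
  have hle : K ∙ v ≤ LinearMap.ker B.mulVecLin := by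
    rwa [Submodule.span_singleton_le_iff_mem, LinearMap.mem_ker, mulVecLin_apply]
  refine (Submodule.eq_of_le_of_finrank_eq hle ?_).symm
  have hker := B.rank_add_finrank_ker_mulVecLin
  rw [finrank_span_singleton hv]
  omega

end Matrix

theorem eq_zero_of_mem_span_singleton_of_dotProduct_eq_zero {K n : Type*} [Field K]
    [LinearOrder K] [IsStrictOrderedRing K] [Fintype n] {v w : n → K} (hw : w ∈ K ∙ v)
    (hvw : v ⬝ᵥ w = 0) : w = 0 := by
  obtain ⟨a, rfl⟩ := Submodule.mem_span_singleton.mp hw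
  rw [dotProduct_smul, smul_eq_mul, mul_eq_zero, dotProduct_self_eq_zero] at hvw
  rcases hvw with rfl | rfl <;> simp

/-- if `λ` is a simple eigenvalue of `J` with eigenvector `v`,
and `V` has full rank `n-1` with columns orthogonal to `v`, then
`Vᵀ(J - λI)V` is invertible. -/
theorem projected_shifted_jacobian_invertible
    {n : ℕ} (hn : 1 ≤ n) (J : Matrix (Fin n) (Fin n) ℝ) (lam : ℝ)
    (hsimple : Polynomial.rootMultiplicity lam J.charpoly = 1)
    (v : Fin n → ℝ) (hv : v ≠ 0) (heig : J.mulVec v = lam • v)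
    (V : Matrix (Fin n) (Fin (n - 1)) ℝ)
    (hrank : V.rank = n - 1) (hVv : Vᵀ.mulVec v = 0) :
    IsUnit (Vᵀ * (J - lam • 1) * V) := by
  rw [isUnit_iff_isUnit_det, isUnit_iff_ne_zero]
  intro hdet
  obtain ⟨x, hx0, hx⟩ := exists_mulVec_eq_zero_iff.mpr hdet
  have hker : LinearMap.ker Vᵀ.mulVecLin = ℝ ∙ v :=
    ker_mulVecLin_eq_span_singleton (by rw [rank_transpose, hrank, Fintype.card_fin]; omega)
      hv hVv
  have hshift : J *ᵥ (V *ᵥ x) - lam • (V *ᵥ x) ∈ ℝ ∙ v := by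
    rw [← hker, LinearMap.mem_ker, mulVecLin_apply, ← hx, ← mulVec_mulVec, ← mulVec_mulVec,
      sub_mulVec, smul_mulVec, one_mulVec]
  have hspan : V *ᵥ x ∈ ℝ ∙ v := by
    rw [← charpoly_toLin'] at hsimple
    exact (toLin' J).mem_span_of_sub_smul_apply_mem_span hsimple hv heig hshift
  have horth : v ⬝ᵥ (V *ᵥ x) = 0 := by
    rw [dotProduct_mulVec, ← mulVec_transpose, hVv, zero_dotProduct]
  have hVinj : Function.Injective V.mulVec :=
    mulVec_injective_of_rank_eq_card (by rw [hrank, Fintype.card_fin])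
  exact hx0 ((hVinj.eq_iff' (mulVec_zero V)).mp
    (eq_zero_of_mem_span_singleton_of_dotProduct_eq_zero hspan horth))
end

section
/- Let n ≥ 1, let J ∈ ℝ^{n×n}, let λ ∈ ℝ be a simple eigenvalue of J with eigenvector v ≠ 0, Jv = λv, and let V ∈ ℝ^{n×(n−1)} have rank n−1 with Vᵀv = 0. Suppose w ∈ ℝⁿ, μ ∈ ℝ and b ∈ ℝⁿ satisfy the bordered linear system (J − λI)w − μv = −b and vᵀw = 0. Then w is given explicitly by w = −V (Vᵀ(J − λI)V)⁻¹ Vᵀ b. -/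
/-!
Write `G = J - λI`. Because `λ` is a simple root of the characteristic polynomial, the
generalized eigenspace `ker G²` is the line `ℝ v`; by rank counting, `ker Vᵀ = ℝ v` and
`range V = v^⊥`, so `w = V y`. If `Vᵀ G V z = 0`, then `G V z ∈ ker Vᵀ = ℝ v`, hence
`V z ∈ ker G² = ℝ v`, and `V z ⊥ v` forces `V z = 0`, i.e. `z = 0`. So `Vᵀ G V` is
invertible, and applying `Vᵀ` to the first equation (where `Vᵀ v = 0` removes `μ`) gives
`Vᵀ G V y = -Vᵀ b`.
-/

open Matrix

namespace Matrix

variable {K ι κ : Type*} [Field K] [Fintype κ]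

theorem ker_sq_sub_smul_one_le_span_of_rootMultiplicity_eq_one [Fintype ι] [DecidableEq ι]
    {A : Matrix ι ι K} {μ : K} (hsimple : A.charpoly.rootMultiplicity μ = 1) {v : ι → K}
    (hv : v ≠ 0) (heig : A *ᵥ v = μ • v) :
    LinearMap.ker ((A - μ • 1) ^ 2).mulVecLin ≤ K ∙ v := by
  have hmax : Module.End.maxGenEigenspace (toLin' A) μ = K ∙ v := by
    refine (Submodule.eq_of_le_of_finrank_le ?_ ?_).symm
    · rw [Submodule.span_singleton_le_iff_mem, Module.End.mem_maxGenEigenspace]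
      exact ⟨1, by simp [heig]⟩
    · rw [LinearMap.finrank_maxGenEigenspace_eq, Matrix.charpoly_toLin', hsimple,
        finrank_span_singleton hv]
  intro x hx
  rw [← hmax, Module.End.mem_maxGenEigenspace]
  refine ⟨2, ?_⟩
  simpa [← toLin'_apply', map_pow, Module.End.one_eq_id] using hx

theorem mulVec_injective_of_rank_eq_card_s7 {V : Matrix ι κ K} (hrank : V.rank = Fintype.card κ) :
    Function.Injective V.mulVec := by
  have h := LinearMap.finrank_range_add_finrank_ker V.mulVecLin
  rw [Module.finrank_fintype_fun_eq_card, ← Matrix.rank, hrank, add_eq_left,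
    Submodule.finrank_eq_zero] at h
  exact LinearMap.ker_eq_bot.mp h

theorem ker_mulVecLin_eq_span_singleton_s7 {m : Type*} [Fintype ι] {A : Matrix m ι K}
    (hrank : A.rank + 1 = Fintype.card ι) {v : ι → K} (hv : v ≠ 0) (hAv : A *ᵥ v = 0) :
    LinearMap.ker A.mulVecLin = K ∙ v := by
  refine (Submodule.eq_of_le_of_finrank_le ?_ ?_).symm
  · rwa [Submodule.span_singleton_le_iff_mem, LinearMap.mem_ker, mulVecLin_apply]
  · have h := LinearMap.finrank_range_add_finrank_ker A.mulVecLin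
    rw [Module.finrank_fintype_fun_eq_card, ← Matrix.rank, ← hrank] at h
    rw [finrank_span_singleton hv]
    omega

theorem range_mulVecLin_eq_ker_dotProduct [Fintype ι] [DecidableEq ι] {V : Matrix ι κ K}
    (hrank : V.rank + 1 = Fintype.card ι) {v : ι → K} (hv : v ≠ 0) (hVv : Vᵀ *ᵥ v = 0) :
    LinearMap.range V.mulVecLin = LinearMap.ker (dotProductEquiv K ι v) := by
  refine Submodule.eq_of_le_of_finrank_le ?_ ?_
  · rintro _ ⟨y, rfl⟩
    rw [LinearMap.mem_ker, dotProductEquiv_apply_apply, mulVecLin_apply, dotProduct_mulVec,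
      ← mulVec_transpose, hVv, zero_dotProduct]
  · have h := Module.Dual.finrank_ker_add_one_of_ne_zero
      ((dotProductEquiv K ι).map_ne_zero_iff.mpr hv)
    rw [Module.finrank_fintype_fun_eq_card, ← hrank] at h
    exact (Nat.add_right_cancel h).le

theorem isUnit_det_transpose_mul_mul [Fintype ι] [DecidableEq ι] [DecidableEq κ]
    [LinearOrder K] [IsStrictOrderedRing K]
    {G : Matrix ι ι K} {V : Matrix ι κ K} {v : ι → K} (hv : v ≠ 0) (hGv : G *ᵥ v = 0)
    (hG : LinearMap.ker (G ^ 2).mulVecLin ≤ K ∙ v) (hVv : Vᵀ *ᵥ v = 0)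
    (hVt : LinearMap.ker Vᵀ.mulVecLin ≤ K ∙ v) (hV : Function.Injective V.mulVec) :
    IsUnit (Vᵀ * G * V).det := by
  rw [← isUnit_iff_isUnit_det, ← mulVec_injective_iff_isUnit, ← coe_mulVecLin,
    ← LinearMap.ker_eq_bot, LinearMap.ker_eq_bot']
  intro z hz
  rw [mulVecLin_apply, Matrix.mul_assoc, ← mulVec_mulVec, ← mulVec_mulVec] at hz
  obtain ⟨c, hc⟩ := Submodule.mem_span_singleton.mp (hVt hz)
  have hsq : (G ^ 2) *ᵥ (V *ᵥ z) = 0 := by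
    rw [sq, ← mulVec_mulVec, ← hc, mulVec_smul, hGv, smul_zero]
  obtain ⟨d, hd⟩ := Submodule.mem_span_singleton.mp (hG hsq)
  have hvVz : v ⬝ᵥ (V *ᵥ z) = 0 := by
    rw [dotProduct_mulVec, ← mulVec_transpose, hVv, zero_dotProduct]
  rw [← hd, dotProduct_smul, smul_eq_mul, mul_eq_zero,
    or_iff_left (dotProduct_self_eq_zero.not.mpr hv)] at hvVz
  exact hV (by rw [← hd, hvVz, zero_smul, mulVec_zero])

end Matrix

theorem bordered_system_solution_formula_general
    {n : ℕ} (J : Matrix (Fin n) (Fin n) ℝ) (lam : ℝ)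
    (hsimple : Polynomial.rootMultiplicity lam J.charpoly = 1)
    (v : Fin n → ℝ) (hv : v ≠ 0) (heig : J.mulVec v = lam • v)
    (V : Matrix (Fin n) (Fin (n - 1)) ℝ)
    (hrank : V.rank = n - 1) (hVv : Vᵀ.mulVec v = 0)
    (w : Fin n → ℝ) (mu : ℝ) (b : Fin n → ℝ)
    (hsys : (J - lam • 1).mulVec w - mu • v = -b)
    (horth : v ⬝ᵥ w = 0) :
    w = -(V.mulVec ((Vᵀ * (J - lam • 1) * V)⁻¹.mulVec (Vᵀ.mulVec b))) := by
  obtain ⟨i, -⟩ := Function.ne_iff.mp hv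
  have hrank' : V.rank + 1 = Fintype.card (Fin n) := by
    rw [hrank, Fintype.card_fin, Nat.sub_add_cancel i.pos]
  have hrankt : Vᵀ.rank + 1 = Fintype.card (Fin n) := by rwa [rank_transpose]
  obtain ⟨y, rfl⟩ : ∃ y, V *ᵥ y = w :=
    (range_mulVecLin_eq_ker_dotProduct hrank' hv hVv).ge horth
  have hM : IsUnit (Vᵀ * (J - lam • 1) * V).det :=
    isUnit_det_transpose_mul_mul hv
      (by rw [sub_mulVec, heig, smul_mulVec, one_mulVec, sub_self])
      (ker_sq_sub_smul_one_le_span_of_rootMultiplicity_eq_one hsimple hv heig) hVv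
      (ker_mulVecLin_eq_span_singleton_s7 hrankt hv hVv).le
      (mulVec_injective_of_rank_eq_card_s7 (by rw [hrank, Fintype.card_fin]))
  have hMy : (Vᵀ * (J - lam • 1) * V) *ᵥ y = -(Vᵀ *ᵥ b) := by
    rw [Matrix.mul_assoc, ← mulVec_mulVec, ← mulVec_mulVec, sub_eq_iff_eq_add.mp hsys,
      mulVec_add, mulVec_smul, hVv, smul_zero, add_zero, mulVec_neg]
  have hy : y = (Vᵀ * (J - lam • 1) * V)⁻¹ *ᵥ -(Vᵀ *ᵥ b) := by
    rw [← hMy, mulVec_mulVec, nonsing_inv_mul _ hM, one_mulVec]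
  rw [hy, mulVec_neg, mulVec_neg]

/-- the solution `w` of the bordered system
`(J - λI)w - μv = -b`, `vᵀw = 0` is `w = -V (Vᵀ(J - λI)V)⁻¹ Vᵀ b`. -/
theorem bordered_system_solution_formula
    {n : ℕ} (hn : 1 ≤ n) (J : Matrix (Fin n) (Fin n) ℝ) (lam : ℝ)
    (hsimple : Polynomial.rootMultiplicity lam J.charpoly = 1)
    (v : Fin n → ℝ) (hv : v ≠ 0) (heig : J.mulVec v = lam • v)
    (V : Matrix (Fin n) (Fin (n - 1)) ℝ)
    (hrank : V.rank = n - 1) (hVv : Vᵀ.mulVec v = 0)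
    (w : Fin n → ℝ) (mu : ℝ) (b : Fin n → ℝ)
    (hsys : (J - lam • 1).mulVec w - mu • v = -b)
    (horth : v ⬝ᵥ w = 0) :
    w = -(V.mulVec ((Vᵀ * (J - lam • 1) * V)⁻¹.mulVec (Vᵀ.mulVec b))) :=
  bordered_system_solution_formula_general J lam hsimple v hv heig V hrank hVv w mu b hsys horth
end

section
/- Let n, m ≥ 1, let M ∈ ℝ^{n×n}, let ṽ ∈ ℝⁿ be nonzero, λ̃ ∈ ℝ, let f₁,…,f_m ∈ ℝ and weights w₁,…,w_m ≥ 0 with Σᵢ₌₁ᵐ |fᵢ| wᵢ > 0, and set r = Mṽ − λ̃ṽ. Consider the set T = { |ε| : ε ∈ ℝ and there exist E₁,…,E_m ∈ ℝ^{n×n} with ‖Eᵢ‖₂ ≤ wᵢ for all i such that (M + ε Σᵢ₌₁ᵐ fᵢ Eᵢ) ṽ = λ̃ ṽ }. Then ‖r‖ / ((Σᵢ₌₁ᵐ |fᵢ| wᵢ) ‖ṽ‖) is the least element of T: it is a lower bound for T and it belongs to T (attained, e.g., by Eᵢ = −sign(fᵢ) wᵢ rṽᵀ/(‖r‖‖ṽ‖)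 when r ≠ 0). -/
/-!
If `(M + ε Σᵢ fᵢ Eᵢ) v = λ v`, then `r = -ε (Σᵢ fᵢ Eᵢ) v`, and `‖(Σᵢ fᵢ Eᵢ) v‖ ≤ (Σᵢ |fᵢ| wᵢ) ‖v‖`
gives the lower bound. It is attained because rank-one perturbations `x ↦ ⟪v, x⟫ r` have norm
exactly `‖r‖ ‖v‖`, so with suitable signs every `fᵢ Eᵢ` sends `v` to the same multiple of `-r`
and no part of the budget `Σᵢ |fᵢ| wᵢ` is lost. Nothing here is specific to matrices: the
argument runs for operators on a real inner product space, and `specNorm` is the operator norm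
of `Matrix.toEuclideanCLM`.
-/

open Matrix

open InnerProductSpace

lemma norm_inv_norm_smul_le_one {X : Type*} [NormedAddCommGroup X] [NormedSpace ℝ X] (x : X) :
    ‖‖x‖⁻¹ • x‖ ≤ 1 := by
  rcases eq_or_ne x 0 with rfl | hx
  · simp
  · exact (norm_smul_inv_norm hx).le

lemma abs_sign_le_one (x : ℝ) : |(SignType.sign x : ℝ)| ≤ 1 := by
  rcases lt_trichotomy x 0 with h | h | h <;> simp [h]

section Perturbation

variable {V ι : Type*} [Fintype ι]

lemma norm_sum_smul_le {X : Type*} [SeminormedAddCommGroup X] [NormedSpace ℝ X]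
    (f w : ι → ℝ) (x : ι → X) (hx : ∀ i, ‖x i‖ ≤ w i) :
    ‖∑ i, f i • x i‖ ≤ ∑ i, |f i| * w i := by
  refine (norm_sum_le _ _).trans (Finset.sum_le_sum fun i _ => ?_)
  rw [norm_smul, Real.norm_eq_abs]
  exact mul_le_mul_of_nonneg_left (hx i) (abs_nonneg _)

lemma norm_apply_sub_smul_le_of_perturbed_eq [NormedAddCommGroup V] [NormedSpace ℝ V]
    (T : V →L[ℝ] V) (v : V) (lam ε : ℝ) (f w : ι → ℝ) (E : ι → V →L[ℝ] V)
    (hE : ∀ i, ‖E i‖ ≤ w i) (h : (T + ε • ∑ i, f i • E i) v = lam • v) :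
    ‖T v - lam • v‖ ≤ |ε| * ((∑ i, |f i| * w i) * ‖v‖) := by
  have hres : T v - lam • v = -(ε • (∑ i, f i • E i) v) := by
    rw [← h]; simp
  rw [hres, norm_neg, norm_smul, Real.norm_eq_abs]
  gcongr
  exact ((∑ i, f i • E i).le_opNorm v).trans
    (mul_le_mul_of_nonneg_right (norm_sum_smul_le f w E hE) (norm_nonneg v))

variable [NormedAddCommGroup V] [InnerProductSpace ℝ V]

lemma exists_perturbation_smul_apply_eq_neg {v : V} (hv : v ≠ 0) (r : V) (f w : ι → ℝ)
    (hw : ∀ i, 0 ≤ w i) (hpos : 0 < ∑ i, |f i| * w i) :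
    ∃ E : ι → V →L[ℝ] V, (∀ i, ‖E i‖ ≤ w i) ∧
      (‖r‖ / ((∑ i, |f i| * w i) * ‖v‖)) • (∑ i, f i • E i) v = -r := by
  set S := ∑ i, |f i| * w i
  have hv' : 0 < ‖v‖ := norm_pos_iff.2 hv
  set u := ‖r‖⁻¹ • r
  refine ⟨fun i => (-(SignType.sign (f i) : ℝ) * w i) • rankOne ℝ u (‖v‖⁻¹ • v), fun i => ?_, ?_⟩
  · rw [norm_smul, norm_rankOne, Real.norm_eq_abs, abs_mul, abs_neg, abs_of_nonneg (hw i)]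
    have hu : ‖u‖ * ‖‖v‖⁻¹ • v‖ ≤ 1 :=
      mul_le_one₀ (norm_inv_norm_smul_le_one r) (norm_nonneg _) (norm_inv_norm_smul_le_one v)
    calc |(SignType.sign (f i) : ℝ)| * w i * (‖u‖ * ‖‖v‖⁻¹ • v‖) ≤ 1 * w i * 1 :=
          mul_le_mul (mul_le_mul_of_nonneg_right (abs_sign_le_one (f i)) (hw i)) hu
            (by positivity) (by simpa using hw i)
      _ = w i := by ring
  · have hsum : ∑ i, f i * (-(SignType.sign (f i) : ℝ) * w i) = -S := by
      simp only [S, ← Finset.sum_neg_distrib]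
      refine Finset.sum_congr rfl fun i _ => ?_
      rw [← self_mul_sign]; ring
    have hvv : inner ℝ (‖v‖⁻¹ • v) v = ‖v‖ := by
      rw [real_inner_smul_left, real_inner_self_eq_norm_sq]; field_simp
    simp only [smul_smul, ← Finset.sum_smul, hsum, _root_.smul_apply,
      rankOne_apply, hvv, u]
    rcases eq_or_ne r 0 with rfl | hr
    · simp
    · rw [← neg_one_smul ℝ r]
      congr 1
      field_simp

theorem isLeast_backward_error (T : V →L[ℝ] V) {v : V} (hv : v ≠ 0) (lam : ℝ) (f w : ι → ℝ)
    (hw : ∀ i, 0 ≤ w i) (hpos : 0 < ∑ i, |f i| * w i) :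
    IsLeast {t : ℝ | ∃ ε : ℝ, ∃ E : ι → V →L[ℝ] V,
        (∀ i, ‖E i‖ ≤ w i) ∧ (T + ε • ∑ i, f i • E i) v = lam • v ∧ t = |ε|}
      (‖T v - lam • v‖ / ((∑ i, |f i| * w i) * ‖v‖)) := by
  have hden : 0 < (∑ i, |f i| * w i) * ‖v‖ := mul_pos hpos (norm_pos_iff.2 hv)
  constructor
  · obtain ⟨E, hE, hEv⟩ :=
      exists_perturbation_smul_apply_eq_neg hv (T v - lam • v) f w hw hpos
    refine ⟨_, E, hE, ?_, (abs_of_nonneg (by positivity)).symm⟩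
    rw [_root_.add_apply, _root_.smul_apply, hEv]
    abel
  · rintro _ ⟨ε, E, hE, hEv, rfl⟩
    rw [div_le_iff₀ hden]
    exact norm_apply_sub_smul_le_of_perturbed_eq T v lam ε f w E hE hEv

end Perturbation

lemma e2norm_eq_norm_toLp {n : ℕ} (v : Fin n → ℝ) : e2norm v = ‖WithLp.toLp 2 v‖ := by
  simp [e2norm, EuclideanSpace.norm_eq]

lemma specNorm_eq_norm_toEuclideanLin {n m : ℕ} (A : Matrix (Fin n) (Fin m) ℝ) :
    specNorm A = ‖LinearMap.toContinuousLinearMap (toEuclideanLin A)‖ := by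
  rw [← ContinuousLinearMap.sSup_sphere_eq_norm, specNorm]
  congr 1
  ext t
  constructor
  · rintro ⟨x, hx, rfl⟩
    exact ⟨WithLp.toLp 2 x, by simpa [e2norm_eq_norm_toLp] using hx,
      by simp [e2norm_eq_norm_toLp]⟩
  · rintro ⟨y, hy, rfl⟩
    exact ⟨WithLp.ofLp y, by simpa [e2norm_eq_norm_toLp] using hy,
      by simp [e2norm_eq_norm_toLp, toLpLin_apply]⟩

lemma specNorm_eq_norm_toEuclideanCLM {n : ℕ} (A : Matrix (Fin n) (Fin n) ℝ) :
    specNorm A = ‖toEuclideanCLM (𝕜 := ℝ) A‖ :=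
  specNorm_eq_norm_toEuclideanLin A

lemma perturbed_mulVec_eq_smul_iff {n : ℕ} {ι : Type*} [Fintype ι]
    (M : Matrix (Fin n) (Fin n) ℝ) (ε : ℝ) (f : ι → ℝ) (E : ι → Matrix (Fin n) (Fin n) ℝ)
    (v : Fin n → ℝ) (lam : ℝ) :
    (M + ε • ∑ i, f i • E i) *ᵥ v = lam • v ↔
      (toEuclideanCLM (𝕜 := ℝ) M + ε • ∑ i, f i • toEuclideanCLM (𝕜 := ℝ) (E i))
        (WithLp.toLp 2 v) = lam • WithLp.toLp 2 v := by
  simp only [← map_smul, ← map_sum, ← map_add, toEuclideanCLM_toLp, ← WithLp.toLp_smul,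
    (WithLp.toLp_injective 2).eq_iff]

theorem backward_error_formula_general
    {n m : ℕ}
    (M : Matrix (Fin n) (Fin n) ℝ)
    (v : Fin n → ℝ) (hv : v ≠ 0) (lam : ℝ)
    (f w : Fin m → ℝ) (hw : ∀ i, 0 ≤ w i)
    (hpos : 0 < ∑ i, |f i| * w i)
    (r : Fin n → ℝ) (hr : r = M.mulVec v - lam • v) :
    IsLeast
      {t : ℝ | ∃ ε : ℝ, ∃ E : Fin m → Matrix (Fin n) (Fin n) ℝ,
        (∀ i, specNorm (E i) ≤ w i) ∧
        (M + ε • ∑ i, f i • E i).mulVec v = lam • v ∧ t = |ε|}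
      (e2norm r / ((∑ i, |f i| * w i) * e2norm v)) := by
  convert isLeast_backward_error (toEuclideanCLM (𝕜 := ℝ) M) (v := WithLp.toLp 2 v)
    (by simpa using hv) lam f w hw hpos using 1
  · ext t
    simp only [Set.mem_ofPred_eq, Function.comp_apply,
      (EquivLike.surjective (toEuclideanCLM (𝕜 := ℝ) (n := Fin n))).comp_left.exists,
      perturbed_mulVec_eq_smul_iff, specNorm_eq_norm_toEuclideanCLM]
  · rw [hr, e2norm_eq_norm_toLp, e2norm_eq_norm_toLp, WithLp.toLp_sub, WithLp.toLp_smul,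
      toEuclideanCLM_toLp]

/-- the backward error of an approximate eigenpair `(λ̃, ṽ)`:
`‖r‖ / ((Σᵢ |fᵢ| wᵢ) ‖ṽ‖)` is the least `|ε|` such that
`(M + ε Σᵢ fᵢ Eᵢ) ṽ = λ̃ ṽ` for some `‖Eᵢ‖₂ ≤ wᵢ`. -/
theorem backward_error_formula
    {n m : ℕ} (hn : 1 ≤ n) (hm : 1 ≤ m)
    (M : Matrix (Fin n) (Fin n) ℝ)
    (v : Fin n → ℝ) (hv : v ≠ 0) (lam : ℝ)
    (f w : Fin m → ℝ) (hw : ∀ i, 0 ≤ w i)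
    (hpos : 0 < ∑ i, |f i| * w i)
    (r : Fin n → ℝ) (hr : r = M.mulVec v - lam • v) :
    IsLeast
      {t : ℝ | ∃ ε : ℝ, ∃ E : Fin m → Matrix (Fin n) (Fin n) ℝ,
        (∀ i, specNorm (E i) ≤ w i) ∧
        (M + ε • ∑ i, f i • E i).mulVec v = lam • v ∧ t = |ε|}
      (e2norm r / ((∑ i, |f i| * w i) * e2norm v)) :=
  backward_error_formula_general M v hv lam f w hw hpos r hr
end

section
/- Let r, ṽ ∈ ℝⁿ be nonzero vectors and set γ = sqrt(2 − (rᵀṽ)²/(‖r‖²‖ṽ‖²)). Then the Frobenius norm of the symmetric matrix (rᵀṽ/‖ṽ‖²) ṽṽᵀ − ṽrᵀ − rṽᵀ equals ‖ṽ‖ ‖r‖ γ; equivalently, ‖(rᵀṽ/‖ṽ‖²) ṽṽᵀ − ṽrᵀ − rṽᵀ‖_F² = ‖ṽ‖²‖r‖² (2 − (rᵀṽ)²/(‖r‖²‖ṽ‖²)). -/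
open Matrix

/-- `‖(rᵀṽ/‖ṽ‖²) ṽṽᵀ − ṽrᵀ − rṽᵀ‖_F = ‖ṽ‖ ‖r‖ γ` with
`γ = sqrt(2 − (rᵀṽ)²/(‖r‖²‖ṽ‖²))`; equivalently the squared identity. -/
theorem frobenius_norm_backward_error_perturbation
    {n : ℕ} (r v : Fin n → ℝ) (hr : r ≠ 0) (hv : v ≠ 0) :
    frobNorm (((r ⬝ᵥ v) / e2norm v ^ 2) • Matrix.vecMulVec v v -
        Matrix.vecMulVec v r - Matrix.vecMulVec r v) =
      e2norm v * e2norm r *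
        Real.sqrt (2 - (r ⬝ᵥ v) ^ 2 / (e2norm r ^ 2 * e2norm v ^ 2)) ∧
    frobNorm (((r ⬝ᵥ v) / e2norm v ^ 2) • Matrix.vecMulVec v v -
        Matrix.vecMulVec v r - Matrix.vecMulVec r v) ^ 2 =
      e2norm v ^ 2 * e2norm r ^ 2 *
        (2 - (r ⬝ᵥ v) ^ 2 / (e2norm r ^ 2 * e2norm v ^ 2)) := by
  set S : ℝ := ∑ i, v i ^ 2 with hS
  set T : ℝ := ∑ i, r i ^ 2 with hT
  set c : ℝ := r ⬝ᵥ v with hc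
  have hSnn : 0 ≤ S := Finset.sum_nonneg fun i _ => sq_nonneg _
  have hTnn : 0 ≤ T := Finset.sum_nonneg fun i _ => sq_nonneg _
  have hSpos : 0 < S := by
    rcases Function.ne_iff.mp hv with ⟨i, hi⟩
    exact Finset.sum_pos' (fun j _ => sq_nonneg _)
      ⟨i, Finset.mem_univ i, lt_of_le_of_ne (sq_nonneg _) (Ne.symm (pow_ne_zero 2 hi))⟩
  have hTpos : 0 < T := by
    rcases Function.ne_iff.mp hr with ⟨i, hi⟩
    exact Finset.sum_pos' (fun j _ => sq_nonneg _)
      ⟨i, Finset.mem_univ i, lt_of_le_of_ne (sq_nonneg _) (Ne.symm (pow_ne_zero 2 hi))⟩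
  have hv2 : e2norm v ^ 2 = S := Real.sq_sqrt hSnn
  have hr2 : e2norm r ^ 2 = T := Real.sq_sqrt hTnn
  have hcs : c ^ 2 ≤ T * S := by
    have := Finset.sum_mul_sq_le_sq_mul_sq Finset.univ r v
    simpa [hc, dotProduct] using this
  -- compute the sum of squares of entries
  have key : (∑ i, ∑ j, ((((c / S) • Matrix.vecMulVec v v -
      Matrix.vecMulVec v r - Matrix.vecMulVec r v)) i j) ^ 2) = 2 * S * T - c ^ 2 := by
    have hcsum : c = ∑ j, r j * v j := by simp [hc, dotProduct]
    have hcsum2 : (∑ i, v i * r i) = c := by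
      rw [hcsum]; exact Finset.sum_congr rfl fun i _ => mul_comm _ _
    have inner : ∀ i : Fin n, (∑ j, ((c / S) * (v i * v j) - v i * r j - r i * v j) ^ 2)
        = ((c / S) ^ 2 * v i ^ 2 + r i ^ 2 - 2 * (c / S) * (v i * r i)) * S
          + v i ^ 2 * T + (2 * (v i * r i) - 2 * (c / S) * v i ^ 2) * c := by
      intro i
      calc (∑ j, ((c / S) * (v i * v j) - v i * r j - r i * v j) ^ 2)
          = ∑ j, (((c / S) ^ 2 * v i ^ 2 + r i ^ 2 - 2 * (c / S) * (v i * r i)) * v j ^ 2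
              + v i ^ 2 * r j ^ 2 + (2 * (v i * r i) - 2 * (c / S) * v i ^ 2) * (r j * v j)) :=
            Finset.sum_congr rfl fun j _ => by ring
        _ = _ := by
            rw [Finset.sum_add_distrib, Finset.sum_add_distrib, ← Finset.mul_sum,
              ← Finset.mul_sum, ← Finset.mul_sum, ← hS, ← hT, ← hcsum]
    calc (∑ i, ∑ j, ((((c / S) • Matrix.vecMulVec v v -
        Matrix.vecMulVec v r - Matrix.vecMulVec r v)) i j) ^ 2)
        = ∑ i, (∑ j, ((c / S) * (v i * v j) - v i * r j - r i * v j) ^ 2) := by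
          refine Finset.sum_congr rfl fun i _ => Finset.sum_congr rfl fun j _ => ?_
          simp [Matrix.vecMulVec_apply, Matrix.sub_apply, Matrix.smul_apply, smul_eq_mul]
      _ = ∑ i, (((c / S) ^ 2 * v i ^ 2 + r i ^ 2 - 2 * (c / S) * (v i * r i)) * S
          + v i ^ 2 * T + (2 * (v i * r i) - 2 * (c / S) * v i ^ 2) * c) :=
          Finset.sum_congr rfl fun i _ => inner i
      _ = ((c / S) ^ 2 * S + T - 2 * (c / S) * c) * S + S * T
          + (2 * c - 2 * (c / S) * S) * c := by
          rw [Finset.sum_add_distrib, Finset.sum_add_distrib]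
          congr 2
          · rw [← Finset.sum_mul]; congr 1
            rw [Finset.sum_sub_distrib, Finset.sum_add_distrib, ← Finset.mul_sum,
              ← Finset.mul_sum, ← hS, ← hT, hcsum2]
          · rw [← Finset.sum_mul, ← hS, mul_comm]
          · rw [← Finset.sum_mul]; congr 1
            rw [Finset.sum_sub_distrib, ← Finset.mul_sum, ← Finset.mul_sum, ← hS, hcsum2]
      _ = 2 * S * T - c ^ 2 := by field_simp; ring
  have hsq : frobNorm (((r ⬝ᵥ v) / e2norm v ^ 2) • Matrix.vecMulVec v v -
      Matrix.vecMulVec v r - Matrix.vecMulVec r v) ^ 2 =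
      e2norm v ^ 2 * e2norm r ^ 2 * (2 - (r ⬝ᵥ v) ^ 2 / (e2norm r ^ 2 * e2norm v ^ 2)) := by
    unfold frobNorm
    rw [hv2, hr2, ← hc, Real.sq_sqrt, key]
    · field_simp
    · rw [key]; nlinarith
  refine ⟨?_, hsq⟩
  have hγnn : 0 ≤ 2 - c ^ 2 / (T * S) := by
    have : c ^ 2 / (T * S) ≤ 1 := by
      rw [div_le_one (by positivity)]; exact hcs
    linarith
  have hrhsnn : 0 ≤ e2norm v * e2norm r *
      Real.sqrt (2 - (r ⬝ᵥ v) ^ 2 / (e2norm r ^ 2 * e2norm v ^ 2)) := by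
    have h1 : 0 ≤ e2norm v := Real.sqrt_nonneg _
    have h2 : 0 ≤ e2norm r := Real.sqrt_nonneg _
    positivity
  have hlhsnn : 0 ≤ frobNorm (((r ⬝ᵥ v) / e2norm v ^ 2) • Matrix.vecMulVec v v -
      Matrix.vecMulVec v r - Matrix.vecMulVec r v) := Real.sqrt_nonneg _
  have hrhssq : (e2norm v * e2norm r *
      Real.sqrt (2 - (r ⬝ᵥ v) ^ 2 / (e2norm r ^ 2 * e2norm v ^ 2))) ^ 2 =
      e2norm v ^ 2 * e2norm r ^ 2 * (2 - (r ⬝ᵥ v) ^ 2 / (e2norm r ^ 2 * e2norm v ^ 2)) := by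
    rw [mul_pow, mul_pow, Real.sq_sqrt (by rw [hr2, hv2, ← hc]; exact hγnn)]
  have heq := hsq.trans hrhssq.symm
  have := congrArg Real.sqrt heq
  rwa [Real.sqrt_sq hlhsnn, Real.sqrt_sq hrhsnn] at this
end
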